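/- arXiv:1707.01350 — 4 statements merged into one kernel-verified Lean document; each statement's English description precedes it below -/
import Mathlib

section
/- Let U₁ and U₂ be K×K invertible real matrices with ‖U₁ - U₂‖_F ≤ ε. Then ‖(U₁U₁ᵀ)⁻¹ - (U₂U₂ᵀ)⁻¹‖_F ≤ (‖U₁‖ + ‖U₂‖) / (λ_min(U₁)² λ_min(U₂)²) · ε, where λ_min denotes the smallest singular value. -/
/-!
With `A = U₁ U₁ᵀ` and `B = U₂ U₂ᵀ` one has `A⁻¹ - B⁻¹ = A⁻¹ (A - B) B⁻¹` and
`A - B = U₁ (U₁ - U₂)ᵀ + (U₁ - U₂) U₂ᵀ`. The Frobenius norm satisfies `‖X Y‖_F ≤ ‖X‖ ‖Y‖_F` and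
`‖X Y‖_F ≤ ‖X‖_F ‖Y‖`, so `‖A⁻¹ - B⁻¹‖_F ≤ ‖A⁻¹‖ (‖U₁‖ + ‖U₂‖) ε ‖B⁻¹‖`. Finally
`‖(U Uᵀ)⁻¹‖ ≤ ‖U⁻¹‖² ≤ λ_min(U)⁻²`, because `λ_min(U) ‖x‖ ≤ ‖U x‖` by the variational
definition of `λ_min(Uᵀ U)` and `⟪x, Uᵀ U x⟫ = ‖U x‖²`.
-/

open scoped BigOperators
open scoped Matrix

noncomputable def frobNorm {m n : Type*} [Fintype m] [Fintype n] (M : Matrix m n ℝ) : ℝ :=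
  Real.sqrt (∑ i, ∑ j, (M i j)^2)

noncomputable def specNorm {m n : Type*} [Fintype m] [Fintype n] [DecidableEq n] (M : Matrix m n ℝ) : ℝ :=
  ‖(Matrix.toEuclideanLin M).toContinuousLinearMap‖

noncomputable def lamMin {m : Type*} [Fintype m] [DecidableEq m] (M : Matrix m m ℝ) : ℝ :=
  ⨅ (v : {v : EuclideanSpace ℝ m // ‖v‖ = 1}), @inner ℝ _ _ v.1 (Matrix.toEuclideanLin M v.1)

noncomputable def lamMax {m : Type*} [Fintype m] [DecidableEq m] (M : Matrix m m ℝ) : ℝ :=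
  ⨆ (v : {v : EuclideanSpace ℝ m // ‖v‖ = 1}), @inner ℝ _ _ v.1 (Matrix.toEuclideanLin M v.1)

noncomputable def sMin {m n : Type*} [Fintype m] [Fintype n] [DecidableEq n] (M : Matrix m n ℝ) : ℝ :=
  Real.sqrt (lamMin (Mᵀ * M))

noncomputable def sMax {m n : Type*} [Fintype m] [Fintype n] [DecidableEq n] (M : Matrix m n ℝ) : ℝ :=
  Real.sqrt (lamMax (Mᵀ * M))

open scoped RealInnerProductSpace

section Spectral

variable {m n : Type*} [Fintype m] [Fintype n] [DecidableEq n]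

lemma specNorm_nonneg (A : Matrix m n ℝ) : 0 ≤ specNorm A :=
  norm_nonneg _

lemma norm_toEuclideanLin_le (A : Matrix m n ℝ) (x : EuclideanSpace ℝ n) :
    ‖Matrix.toEuclideanLin A x‖ ≤ specNorm A * ‖x‖ :=
  (Matrix.toEuclideanLin A).toContinuousLinearMap.le_opNorm x

lemma specNorm_mul_le {l : Type*} [Fintype l] [DecidableEq l] (A : Matrix m n ℝ)
    (B : Matrix n l ℝ) : specNorm (A * B) ≤ specNorm A * specNorm B :=
  Matrix.l2_opNorm_mul A B

lemma specNorm_transpose [DecidableEq m] (A : Matrix m n ℝ) : specNorm Aᵀ = specNorm A :=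
  Matrix.l2_opNorm_conjTranspose A

end Spectral

section Frobenius

attribute [local instance] Matrix.frobeniusNormedAddCommGroup

variable {l m n : Type*} [Fintype l] [Fintype m] [Fintype n]

lemma frobNorm_eq_norm (M : Matrix m n ℝ) : frobNorm M = ‖M‖ := by
  rw [Matrix.frobenius_norm_def, frobNorm, Real.sqrt_eq_rpow]
  simp [Real.norm_eq_abs, sq_abs]

lemma frobNorm_nonneg (M : Matrix m n ℝ) : 0 ≤ frobNorm M :=
  Real.sqrt_nonneg _

lemma frobNorm_eq_sqrt_sum_col (M : Matrix m n ℝ) :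
    frobNorm M = √(∑ j, ‖WithLp.toLp 2 (fun i ↦ M i j)‖ ^ 2) := by
  simp only [frobNorm, EuclideanSpace.real_norm_sq_eq]
  rw [Finset.sum_comm]

lemma frobNorm_mul_le_specNorm_mul [DecidableEq n] (A : Matrix m n ℝ) (B : Matrix n l ℝ) :
    frobNorm (A * B) ≤ specNorm A * frobNorm B := by
  rw [frobNorm_eq_sqrt_sum_col, frobNorm_eq_sqrt_sum_col, ← Real.sqrt_sq (specNorm_nonneg A),
    ← Real.sqrt_mul (sq_nonneg _), Finset.mul_sum]
  gcongr with j
  rw [← mul_pow]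
  gcongr
  exact norm_toEuclideanLin_le A (WithLp.toLp 2 (fun i ↦ B i j))

lemma frobNorm_mul_le_mul_specNorm [DecidableEq m] [DecidableEq n] (A : Matrix l m ℝ)
    (B : Matrix m n ℝ) : frobNorm (A * B) ≤ frobNorm A * specNorm B := by
  simpa only [frobNorm_eq_norm, ← Matrix.transpose_mul, Matrix.frobenius_norm_transpose,
    specNorm_transpose, mul_comm (specNorm B)] using frobNorm_mul_le_specNorm_mul Bᵀ Aᵀ

lemma frobNorm_mul_mul_le {o : Type*} [Fintype o] [DecidableEq m] [DecidableEq n] [DecidableEq o]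
    (A : Matrix l m ℝ) (B : Matrix m n ℝ) (C : Matrix n o ℝ) :
    frobNorm (A * B * C) ≤ specNorm A * frobNorm B * specNorm C :=
  (frobNorm_mul_le_mul_specNorm _ C).trans <| by
    gcongr
    · exact specNorm_nonneg C
    · exact frobNorm_mul_le_specNorm_mul A B

lemma frobNorm_mul_transpose_sub_le [DecidableEq m] [DecidableEq n] (U V : Matrix m n ℝ) :
    frobNorm (U * Uᵀ - V * Vᵀ) ≤ (specNorm U + specNorm V) * frobNorm (U - V) := by
  have hsplit : U * Uᵀ - V * Vᵀ = U * (U - V)ᵀ + (U - V) * Vᵀ := by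
    rw [Matrix.transpose_sub, Matrix.mul_sub, Matrix.sub_mul]
    abel
  calc frobNorm (U * Uᵀ - V * Vᵀ)
      ≤ frobNorm (U * (U - V)ᵀ) + frobNorm ((U - V) * Vᵀ) := by
        simpa only [frobNorm_eq_norm, hsplit] using norm_add_le _ _
    _ ≤ specNorm U * frobNorm (U - V)ᵀ + frobNorm (U - V) * specNorm Vᵀ :=
        add_le_add (frobNorm_mul_le_specNorm_mul _ _) (frobNorm_mul_le_mul_specNorm _ _)
    _ = (specNorm U + specNorm V) * frobNorm (U - V) := by
        rw [specNorm_transpose, frobNorm_eq_norm, Matrix.frobenius_norm_transpose,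
          ← frobNorm_eq_norm]
        ring

lemma frobNorm_inv_sub_inv_le [DecidableEq n] {A B : Matrix n n ℝ} (hA : IsUnit A.det)
    (hB : IsUnit B.det) :
    frobNorm (A⁻¹ - B⁻¹) ≤ specNorm A⁻¹ * frobNorm (A - B) * specNorm B⁻¹ := by
  have hAB : IsUnit A ↔ IsUnit B := by
    simp only [Matrix.isUnit_iff_isUnit_det, hA, hB]
  have hsplit := Ring.inverse_sub_inverse hAB
  rw [← Matrix.nonsing_inv_eq_ringInverse, ← Matrix.nonsing_inv_eq_ringInverse] at hsplit
  rw [hsplit, frobNorm_eq_norm (A - B), ← norm_neg, neg_sub, ← frobNorm_eq_norm]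
  exact frobNorm_mul_mul_le _ _ _

end Frobenius

section SingularValue

variable {m n : Type*} [Fintype m] [Fintype n] [DecidableEq m] [DecidableEq n]

lemma inner_toEuclideanLin_transpose_mul_self (U : Matrix m n ℝ) (v : EuclideanSpace ℝ n) :
    ⟪v, Matrix.toEuclideanLin (Uᵀ * U) v⟫ = ‖Matrix.toEuclideanLin U v‖ ^ 2 := by
  rw [Matrix.toLpLin_mul_same, LinearMap.comp_apply,
    ← Matrix.conjTranspose_eq_transpose_of_trivial, Matrix.toEuclideanLin_conjTranspose_eq_adjoint,
    LinearMap.adjoint_inner_right, real_inner_self_eq_norm_sq]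

lemma lamMin_transpose_mul_self_le (U : Matrix m n ℝ) {v : EuclideanSpace ℝ n} (hv : ‖v‖ = 1) :
    lamMin (Uᵀ * U) ≤ ‖Matrix.toEuclideanLin U v‖ ^ 2 := by
  rw [← inner_toEuclideanLin_transpose_mul_self]
  refine ciInf_le ⟨0, ?_⟩ (⟨v, hv⟩ : {v : EuclideanSpace ℝ n // ‖v‖ = 1})
  rintro _ ⟨w, rfl⟩
  simp only [inner_toEuclideanLin_transpose_mul_self]
  positivity

lemma sMin_mul_norm_le (U : Matrix m n ℝ) (x : EuclideanSpace ℝ n) :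
    sMin U * ‖x‖ ≤ ‖Matrix.toEuclideanLin U x‖ := by
  rcases eq_or_ne x 0 with rfl | hx
  · simp
  have hx' : 0 < ‖x‖ := norm_pos_iff.2 hx
  have hunit : ‖‖x‖⁻¹ • x‖ = 1 := norm_smul_inv_norm hx
  have := Real.sqrt_le_sqrt (lamMin_transpose_mul_self_le U hunit)
  rw [Real.sqrt_sq (norm_nonneg _), map_smul, norm_smul, norm_inv, norm_norm] at this
  rwa [← le_div_iff₀ hx', div_eq_inv_mul]

end SingularValue

section Invertible

variable {n : Type*} [Fintype n] [DecidableEq n] {U : Matrix n n ℝ}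

lemma toEuclideanLin_nonsing_inv_apply (hU : IsUnit U.det) (v : EuclideanSpace ℝ n) :
    Matrix.toEuclideanLin U⁻¹ (Matrix.toEuclideanLin U v) = v := by
  rw [← LinearMap.comp_apply, ← Matrix.toLpLin_mul_same, Matrix.nonsing_inv_mul U hU,
    Matrix.toLpLin_one, LinearMap.id_apply]

lemma toEuclideanLin_apply_nonsing_inv (hU : IsUnit U.det) (v : EuclideanSpace ℝ n) :
    Matrix.toEuclideanLin U (Matrix.toEuclideanLin U⁻¹ v) = v := by
  rw [← LinearMap.comp_apply, ← Matrix.toLpLin_mul_same, Matrix.mul_nonsing_inv U hU,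
    Matrix.toLpLin_one, LinearMap.id_apply]

lemma sMin_pos [Nonempty n] (hU : IsUnit U.det) : 0 < sMin U := by
  have hc : 0 < specNorm U⁻¹ + 1 := by linarith [specNorm_nonneg U⁻¹]
  have hbound (v : {v : EuclideanSpace ℝ n // ‖v‖ = 1}) :
      (specNorm U⁻¹ + 1)⁻¹ ^ 2 ≤ ⟪v.1, Matrix.toEuclideanLin (Uᵀ * U) v.1⟫ := by
    obtain ⟨v, hv⟩ := v
    -- `‖v‖ ≤ ‖U⁻¹‖ ‖U v‖`; the `+ 1` keeps the lower bound positive even before `U⁻¹ ≠ 0` is known.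
    have h1 : 1 ≤ specNorm U⁻¹ * ‖Matrix.toEuclideanLin U v‖ := by
      simpa [hv, toEuclideanLin_nonsing_inv_apply hU] using
        norm_toEuclideanLin_le U⁻¹ (Matrix.toEuclideanLin U v)
    have h2 : (specNorm U⁻¹ + 1)⁻¹ ≤ ‖Matrix.toEuclideanLin U v‖ := by
      rw [inv_le_iff_one_le_mul₀' hc]
      nlinarith [norm_nonneg (Matrix.toEuclideanLin U v)]
    rw [inner_toEuclideanLin_transpose_mul_self]
    gcongr
  have : Nonempty {v : EuclideanSpace ℝ n // ‖v‖ = 1} :=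
    ⟨⟨EuclideanSpace.single (Classical.arbitrary n) 1, by simp⟩⟩
  exact Real.sqrt_pos.2 <| lt_of_lt_of_le (by positivity) (le_ciInf hbound)

lemma specNorm_nonsing_inv_le [Nonempty n] (hU : IsUnit U.det) : specNorm U⁻¹ ≤ (sMin U)⁻¹ := by
  refine ContinuousLinearMap.opNorm_le_bound _ (inv_nonneg.2 (sMin_pos hU).le) fun x ↦ ?_
  rw [inv_mul_eq_div, le_div_iff₀' (sMin_pos hU)]
  simpa [toEuclideanLin_apply_nonsing_inv hU] using sMin_mul_norm_le U (Matrix.toEuclideanLin U⁻¹ x)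

lemma specNorm_inv_mul_transpose_le [Nonempty n] (hU : IsUnit U.det) :
    specNorm (U * Uᵀ)⁻¹ ≤ (sMin U ^ 2)⁻¹ :=
  calc specNorm (U * Uᵀ)⁻¹ = specNorm (U⁻¹ᵀ * U⁻¹) := by
        rw [Matrix.mul_inv_rev, Matrix.transpose_nonsing_inv]
    _ ≤ specNorm U⁻¹ᵀ * specNorm U⁻¹ := specNorm_mul_le _ _
    _ = specNorm U⁻¹ ^ 2 := by rw [specNorm_transpose, sq]
    _ ≤ (sMin U ^ 2)⁻¹ := by
        rw [← inv_pow]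
        gcongr
        · exact specNorm_nonneg _
        · exact specNorm_nonsing_inv_le hU

end Invertible

theorem stmt_1 {K : ℕ} (U₁ U₂ : Matrix (Fin K) (Fin K) ℝ)
    (h₁ : IsUnit U₁.det) (h₂ : IsUnit U₂.det) (ε : ℝ)
    (hε : frobNorm (U₁ - U₂) ≤ ε) :
    frobNorm ((U₁ * U₁ᵀ)⁻¹ - (U₂ * U₂ᵀ)⁻¹)
      ≤ (specNorm U₁ + specNorm U₂) / (sMin U₁ ^ 2 * sMin U₂ ^ 2) * ε := by
  have hε₀ : 0 ≤ ε := (frobNorm_nonneg _).trans hε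
  have hspec : 0 ≤ specNorm U₁ + specNorm U₂ := add_nonneg (specNorm_nonneg _) (specNorm_nonneg _)
  rcases isEmpty_or_nonempty (Fin K) with hK | hK
  · simp only [frobNorm, Finset.univ_eq_empty, Finset.sum_empty, Real.sqrt_zero]
    positivity
  have hG₁ : IsUnit (U₁ * U₁ᵀ).det := by simpa [Matrix.det_mul] using h₁.mul h₁
  have hG₂ : IsUnit (U₂ * U₂ᵀ).det := by simpa [Matrix.det_mul] using h₂.mul h₂
  calc frobNorm ((U₁ * U₁ᵀ)⁻¹ - (U₂ * U₂ᵀ)⁻¹)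
      ≤ specNorm (U₁ * U₁ᵀ)⁻¹ * frobNorm (U₁ * U₁ᵀ - U₂ * U₂ᵀ) * specNorm (U₂ * U₂ᵀ)⁻¹ :=
        frobNorm_inv_sub_inv_le hG₁ hG₂
    _ ≤ (sMin U₁ ^ 2)⁻¹ * ((specNorm U₁ + specNorm U₂) * ε) * (sMin U₂ ^ 2)⁻¹ := by
        have hdiff : frobNorm (U₁ * U₁ᵀ - U₂ * U₂ᵀ) ≤ (specNorm U₁ + specNorm U₂) * ε :=
          (frobNorm_mul_transpose_sub_le U₁ U₂).trans (mul_le_mul_of_nonneg_left hε hspec)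
        exact mul_le_mul (mul_le_mul (specNorm_inv_mul_transpose_le h₁) hdiff
          (frobNorm_nonneg _) (by positivity)) (specNorm_inv_mul_transpose_le h₂)
          (specNorm_nonneg _) (mul_nonneg (by positivity) (mul_nonneg hspec hε₀))
    _ = (specNorm U₁ + specNorm U₂) / (sMin U₁ ^ 2 * sMin U₂ ^ 2) * ε := by
        field_simp
end

section
/- Let P be an n×n real symmetric matrix of rank K with K-th largest (in absolute value) eigenvalue λ_K(P) ≠ 0, and let A be a symmetric matrix. Let L̂ and L be the diagonal K×K matrices of the K largest-in-absolute-value eigenvalues of A and P respectively, and let O_P be the orthogonal matrix from the Davis–Kahan bound satisfying ‖Û - U O_P‖_F ≤ 2√(2K)‖A - P‖/λ_K(P). Then ‖L̂ - O_Pᵀ L O_P‖ ≤ (2√(2K)(‖A‖+‖P‖)/λ_K(P) + 1)·‖A - P‖. -/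
open scoped BigOperators
open scoped Matrix

/-! With `E := Û - U O`, the eigen-relations `Ûᵀ A Û = L̂` and `Uᵀ P U = L` give the exact splitting
`L̂ - Oᵀ L O = Ûᵀ A E + Ûᵀ (A - P) (U O) + Eᵀ P (U O)`.
Since `Û` and `U O` have orthonormal columns, their spectral norms are at most `1`, so the three
terms are bounded by `‖A‖ ‖E‖`, `‖A - P‖` and `‖P‖ ‖E‖`; finally `‖E‖ ≤ ‖E‖_F`, which is controlled
by the Davis–Kahan bound. -/

open scoped Matrix Matrix.Norms.L2Operator

namespace Matrix

variable {m n : Type*} [Fintype m] [Fintype n] [DecidableEq n]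

lemma specNorm_eq_l2_opNorm (M : Matrix m n ℝ) : specNorm M = ‖M‖ := rfl

lemma l2_opNorm_le_frobNorm (M : Matrix m n ℝ) : ‖M‖ ≤ frobNorm M := by
  refine ContinuousLinearMap.opNorm_le_bound _ (Real.sqrt_nonneg _) fun x => ?_
  have hx : ‖x‖ = Real.sqrt (∑ j, x j ^ 2) := by
    simp only [EuclideanSpace.norm_eq, Real.norm_eq_abs, sq_abs]
  calc _ = Real.sqrt (∑ i, (∑ j, M i j * x j) ^ 2) := by
        simp only [EuclideanSpace.norm_eq, Real.norm_eq_abs, sq_abs]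
        rfl
    _ ≤ Real.sqrt ((∑ i, ∑ j, M i j ^ 2) * ∑ j, x j ^ 2) := by
        rw [Finset.sum_mul]
        exact Real.sqrt_le_sqrt <| Finset.sum_le_sum fun i _ => Finset.sum_mul_sq_le_sq_mul_sq _ _ _
    _ = frobNorm M * ‖x‖ := by rw [hx, frobNorm, Real.sqrt_mul (by positivity)]

lemma l2_opNorm_le_one_of_transpose_mul_self (M : Matrix m n ℝ) (h : Mᵀ * M = 1) : ‖M‖ ≤ 1 := by
  have hsq : ‖M‖ * ‖M‖ = ‖(1 : Matrix n n ℝ)‖ := by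
    rw [← l2_opNorm_conjTranspose_mul_self, conjTranspose_eq_transpose_of_trivial, h]
  have hone : ‖(1 : Matrix n n ℝ)‖ ≤ 1 := by
    rw [cstar_norm_def, map_one]
    exact ContinuousLinearMap.norm_id_le
  nlinarith [norm_nonneg M]

variable [DecidableEq m]

lemma l2_opNorm_transpose (M : Matrix m n ℝ) : ‖Mᵀ‖ = ‖M‖ := by
  rw [← conjTranspose_eq_transpose_of_trivial, l2_opNorm_conjTranspose]

end Matrix

section EigenPerturbation

variable {n k l R : Type*} [Fintype n] [Fintype k] [Fintype l] [DecidableEq k] [DecidableEq l]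

lemma eigenvalue_sub_conj_eq [CommRing R] {A P : Matrix n n R} {U : Matrix n k R}
    {Uh : Matrix n l R} {L : Matrix k k R} {Lh : Matrix l l R} {O : Matrix k l R}
    (hU : Uᵀ * U = 1) (hUh : Uhᵀ * Uh = 1) (hP : P = U * L * Uᵀ) (hA : A * Uh = Uh * Lh) :
    Lh - Oᵀ * L * O
      = Uhᵀ * A * (Uh - U * O) + Uhᵀ * (A - P) * (U * O) + (Uh - U * O)ᵀ * P * (U * O) := by
  have hLh : Lh = Uhᵀ * A * Uh := by rw [Matrix.mul_assoc, hA, ← Matrix.mul_assoc, hUh, Matrix.one_mul]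
  have hL : L = Uᵀ * P * U := by
    rw [hP, Matrix.mul_assoc, Matrix.mul_assoc, hU, Matrix.mul_one, ← Matrix.mul_assoc, hU,
      Matrix.one_mul]
  rw [hLh, hL]
  simp only [Matrix.mul_sub, Matrix.sub_mul, Matrix.transpose_sub, Matrix.transpose_mul,
    Matrix.mul_assoc]
  abel

variable [DecidableEq n]

lemma l2_opNorm_eigenvalue_sub_conj_le {A P : Matrix n n ℝ} {U : Matrix n k ℝ}
    {Uh : Matrix n l ℝ} {L : Matrix k k ℝ} {Lh : Matrix l l ℝ} {O : Matrix k l ℝ}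
    (hU : Uᵀ * U = 1) (hUh : Uhᵀ * Uh = 1) (hO : Oᵀ * O = 1)
    (hP : P = U * L * Uᵀ) (hA : A * Uh = Uh * Lh) :
    ‖Lh - Oᵀ * L * O‖ ≤ (‖A‖ + ‖P‖) * ‖Uh - U * O‖ + ‖A - P‖ := by
  set E := Uh - U * O
  have hUhT : ‖Uhᵀ‖ ≤ 1 := by
    rw [Matrix.l2_opNorm_transpose]; exact Matrix.l2_opNorm_le_one_of_transpose_mul_self _ hUh
  have hUO : ‖U * O‖ ≤ 1 := by
    refine Matrix.l2_opNorm_le_one_of_transpose_mul_self _ ?_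
    rw [Matrix.transpose_mul, Matrix.mul_assoc, ← Matrix.mul_assoc Uᵀ, hU, Matrix.one_mul, hO]
  have hTermA : ‖Uhᵀ * A * E‖ ≤ ‖A‖ * ‖E‖ :=
    calc ‖Uhᵀ * A * E‖ ≤ ‖Uhᵀ‖ * ‖A‖ * ‖E‖ := by
          grw [Matrix.l2_opNorm_mul, Matrix.l2_opNorm_mul]
      _ ≤ ‖A‖ * ‖E‖ := by grw [hUhT, one_mul]
  have hTermAP : ‖Uhᵀ * (A - P) * (U * O)‖ ≤ ‖A - P‖ :=
    calc ‖Uhᵀ * (A - P) * (U * O)‖ ≤ ‖Uhᵀ‖ * ‖A - P‖ * ‖U * O‖ := by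
          grw [Matrix.l2_opNorm_mul, Matrix.l2_opNorm_mul]
      _ ≤ ‖A - P‖ := by grw [hUhT, hUO, one_mul, mul_one]
  have hTermP : ‖Eᵀ * P * (U * O)‖ ≤ ‖P‖ * ‖E‖ :=
    calc ‖Eᵀ * P * (U * O)‖ ≤ ‖Eᵀ‖ * ‖P‖ * ‖U * O‖ := by
          grw [Matrix.l2_opNorm_mul, Matrix.l2_opNorm_mul]
      _ ≤ ‖P‖ * ‖E‖ := by rw [Matrix.l2_opNorm_transpose]; grw [hUO]; linarith
  calc ‖Lh - Oᵀ * L * O‖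
      = ‖Uhᵀ * A * E + Uhᵀ * (A - P) * (U * O) + Eᵀ * P * (U * O)‖ := by
        rw [eigenvalue_sub_conj_eq hU hUh hP hA]
    _ ≤ ‖Uhᵀ * A * E‖ + ‖Uhᵀ * (A - P) * (U * O)‖ + ‖Eᵀ * P * (U * O)‖ := norm_add₃_le
    _ ≤ (‖A‖ + ‖P‖) * ‖E‖ + ‖A - P‖ := by linarith

end EigenPerturbation

theorem stmt_2_general {n K : ℕ}
    (A P : Matrix (Fin n) (Fin n) ℝ)
    (U Uh : Matrix (Fin n) (Fin K) ℝ) (L Lh : Matrix (Fin K) (Fin K) ℝ)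
    (hU : Uᵀ * U = 1) (hUh : Uhᵀ * Uh = 1)
    (hPdecomp : P = U * L * Uᵀ) (hAeig : A * Uh = Uh * Lh)
    (lK : ℝ)
    (O : Matrix (Fin K) (Fin K) ℝ) (hO : Oᵀ * O = 1)
    (hDK : frobNorm (Uh - U * O) ≤ 2 * Real.sqrt (2 * K) * specNorm (A - P) / lK) :
    specNorm (Lh - Oᵀ * L * O)
      ≤ (2 * Real.sqrt (2 * K) * (specNorm A + specNorm P) / lK + 1) * specNorm (A - P) := by
  simp only [Matrix.specNorm_eq_l2_opNorm] at hDK ⊢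
  have hE := (Matrix.l2_opNorm_le_frobNorm (Uh - U * O)).trans hDK
  calc ‖Lh - Oᵀ * L * O‖ ≤ (‖A‖ + ‖P‖) * ‖Uh - U * O‖ + ‖A - P‖ :=
        l2_opNorm_eigenvalue_sub_conj_le hU hUh hO hPdecomp hAeig
    _ ≤ (‖A‖ + ‖P‖) * (2 * Real.sqrt (2 * K) * ‖A - P‖ / lK) + ‖A - P‖ := by gcongr
    _ = (2 * Real.sqrt (2 * K) * (‖A‖ + ‖P‖) / lK + 1) * ‖A - P‖ := by ring

theorem stmt_2 {n K : ℕ}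
    (A P : Matrix (Fin n) (Fin n) ℝ) (hA : Aᵀ = A) (hP : Pᵀ = P) (hrank : P.rank = K)
    (U Uh : Matrix (Fin n) (Fin K) ℝ) (L Lh : Matrix (Fin K) (Fin K) ℝ)
    (hLdiag : L.IsDiag) (hLhdiag : Lh.IsDiag)
    (hU : Uᵀ * U = 1) (hUh : Uhᵀ * Uh = 1)
    (hPdecomp : P = U * L * Uᵀ) (hAeig : A * Uh = Uh * Lh)
    (hbest : specNorm (Uh * Lh * Uhᵀ - U * L * Uᵀ) ≤ specNorm (A - P))
    (lK : ℝ) (hlK : 0 < lK) (hlKval : specNorm L⁻¹ = 1 / lK)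
    (O : Matrix (Fin K) (Fin K) ℝ) (hO : Oᵀ * O = 1)
    (hDK : frobNorm (Uh - U * O) ≤ 2 * Real.sqrt (2 * K) * specNorm (A - P) / lK) :
    specNorm (Lh - Oᵀ * L * O)
      ≤ (2 * Real.sqrt (2 * K) * (specNorm A + specNorm P) / lK + 1) * specNorm (A - P) :=
  stmt_2_general A P U Uh L Lh hU hUh hPdecomp hAeig lK O hO hDK
end

section
/- Let Θ, Θ' ∈ [0,1]^{n×K} have rows summing to 1 and each contain at least one pure node per community (a row equal to each standard basis vector), and let B, B' ∈ [0,1]^{K×K} be symmetric invertible matrices. If Θ B Θᵀ = Θ' B' Θ'ᵀ then there exists a K×K permutation matrix Π such that Θ = Θ' Π and B = Πᵀ B' Π. -/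
/-!
Restricting `Θ B Θᵀ = Θ' B' Θ'ᵀ` to the pure nodes of `Θ` (rows `f k = e_k`) and of `Θ'`
(rows `g k = e_k`) gives `B = R B' Rᵀ` and `B R'ᵀ = R B'`, where `R` collects the rows of `Θ'` at
the nodes `f` and `R'` the rows of `Θ` at the nodes `g`. As `B` is invertible, `R R' = 1`. Both
`R` and `R'` are row-stochastic, and a row-stochastic matrix with a row-stochastic right inverse
is a permutation matrix: so `R = Πᵀ`, `R' = Π`, hence `B = Πᵀ B' Π`, and restricting to the
columns `f` alone gives `Θ B = Θ' B' Π = Θ' Π B`, i.e. `Θ = Θ' Π`.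
-/

open scoped BigOperators
open scoped Matrix

namespace Matrix

variable {n R : Type*} [Fintype n] [DecidableEq n]

lemma toMatrix_toPEquiv_mul_transpose [Semiring R] (σ : Equiv.Perm n) :
    (σ.toPEquiv.toMatrix : Matrix n n R) * σ.toPEquiv.toMatrixᵀ = 1 := by
  rw [← Equiv.Perm.permMatrix, transpose_permMatrix, ← permMatrix_mul, inv_mul_cancel,
    permMatrix_one]

lemma submatrix_mul_mul_transpose {m k : Type*} [Fintype k] [NonUnitalNonAssocSemiring R]
    (Θ Ψ : Matrix m k R) (B : Matrix k k R) {p q : Type*} (f : p → m) (g : q → m) :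
    (Θ * B * Ψᵀ).submatrix f g = Θ.submatrix f id * B * (Ψ.submatrix g id)ᵀ := by
  simp only [submatrix_mul _ _ _ id _ Function.bijective_id, submatrix_id_id, transpose_submatrix]

section Stochastic

variable [Field R] [LinearOrder R] [IsStrictOrderedRing R]

lemma eq_single_of_mem_rowStochastic_of_apply_eq_one {C : Matrix n n R}
    (hC : C ∈ rowStochastic R n) {a k : n} (hak : C a k = 1) : C a = Pi.single k 1 := by
  have hrest : ∑ l ∈ Finset.univ.erase k, C a l = 0 := by
    have hsum := sum_row_of_mem_rowStochastic hC a
    rw [← Finset.add_sum_erase _ _ (Finset.mem_univ k), hak] at hsum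
    linarith
  ext l
  rcases eq_or_ne l k with rfl | hl
  · simp [hak]
  · rw [Pi.single_eq_of_ne hl]
    exact (Finset.sum_eq_zero_iff_of_nonneg fun _ _ => nonneg_of_mem_rowStochastic hC).1 hrest l
      (Finset.mem_erase.2 ⟨hl, Finset.mem_univ l⟩)

/-- `∑ₐ A k a * C a k = 1 = ∑ₐ A k a` with `C a k ≤ 1` forces `C a k = 1` wherever `A k a > 0`. -/
lemma exists_apply_eq_one_of_mul_eq_one {A C : Matrix n n R} (hA : A ∈ rowStochastic R n)
    (hC : C ∈ rowStochastic R n) (h : A * C = 1) (k : n) : ∃ a, C a k = 1 := by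
  by_contra! hne
  obtain ⟨a, -, ha⟩ := Finset.exists_ne_zero_of_sum_ne_zero
    (by rw [sum_row_of_mem_rowStochastic hA k]; exact one_ne_zero)
  have hlt : ∑ a, A k a * C a k < ∑ a, A k a := by
    refine Finset.sum_lt_sum (fun b _ => ?_) ⟨a, Finset.mem_univ a, ?_⟩
    · exact mul_le_of_le_one_right (nonneg_of_mem_rowStochastic hA) (le_one_of_mem_rowStochastic hC)
    · exact mul_lt_of_lt_one_right ((nonneg_of_mem_rowStochastic hA).lt_of_ne' ha)
        ((le_one_of_mem_rowStochastic hC).lt_of_ne (hne a))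
  have hdiag : ∑ a, A k a * C a k = 1 := by simpa [mul_apply] using congrFun (congrFun h k) k
  rw [hdiag, sum_row_of_mem_rowStochastic hA k] at hlt
  exact hlt.false

lemma exists_perm_eq_toMatrix_of_mul_eq_one {A C : Matrix n n R} (hA : A ∈ rowStochastic R n)
    (hC : C ∈ rowStochastic R n) (h : A * C = 1) :
    ∃ σ : Equiv.Perm n, C = σ.toPEquiv.toMatrix := by
  choose τ hτ using exists_apply_eq_one_of_mul_eq_one hA hC h
  have hrow k : C (τ k) = Pi.single k 1 := eq_single_of_mem_rowStochastic_of_apply_eq_one hC (hτ k)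
  have hinj : Function.Injective τ := fun k k' hkk' => by
    by_contra hne
    simpa [hkk', hrow k', Pi.single_eq_of_ne hne] using hτ k
  let e := Equiv.ofBijective τ (Finite.injective_iff_bijective.1 hinj)
  refine ⟨e.symm, funext fun a => ?_⟩
  rw [PEquiv.toMatrix_toPEquiv_apply, ← hrow]
  exact congrArg C (e.apply_symm_apply a).symm

theorem exists_perm_eq_transpose_toMatrix_of_mul_eq_one {A C : Matrix n n R}
    (hA : A ∈ rowStochastic R n) (hC : C ∈ rowStochastic R n) (h : A * C = 1) :
    ∃ σ : Equiv.Perm n, A = σ.toPEquiv.toMatrixᵀ ∧ C = σ.toPEquiv.toMatrix := by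
  obtain ⟨σ, rfl⟩ := exists_perm_eq_toMatrix_of_mul_eq_one hA hC h
  refine ⟨σ, ?_, rfl⟩
  rw [← Matrix.mul_one A, ← toMatrix_toPEquiv_mul_transpose σ, ← Matrix.mul_assoc, h,
    Matrix.one_mul]

end Stochastic

end Matrix

open Matrix

theorem stmt_5_general {n K : ℕ} (Θ Θ' : Matrix (Fin n) (Fin K) ℝ)
    (B B' : Matrix (Fin K) (Fin K) ℝ)
    (hΘ01 : ∀ i k, Θ i k ∈ Set.Icc (0:ℝ) 1) (hΘ'01 : ∀ i k, Θ' i k ∈ Set.Icc (0:ℝ) 1)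
    (hrow : ∀ i, ∑ k, Θ i k = 1) (hrow' : ∀ i, ∑ k, Θ' i k = 1)
    (hpure : ∀ k, ∃ i, ∀ l, Θ i l = if l = k then 1 else 0)
    (hpure' : ∀ k, ∃ i, ∀ l, Θ' i l = if l = k then 1 else 0)
    (hB : IsUnit B.det)
    (heq : Θ * B * Θᵀ = Θ' * B' * Θ'ᵀ) :
    ∃ σ : Equiv.Perm (Fin K),
      Θ = Θ' * (σ.toPEquiv.toMatrix : Matrix (Fin K) (Fin K) ℝ) ∧
      B = (σ.toPEquiv.toMatrix : Matrix (Fin K) (Fin K) ℝ)ᵀ * B'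
            * (σ.toPEquiv.toMatrix : Matrix (Fin K) (Fin K) ℝ) := by
  have := B.invertibleOfIsUnitDet hB
  choose f hf using hpure
  choose g hg using hpure'
  have hΘf : Θ.submatrix f id = 1 := by ext k l; simp [hf, one_apply, eq_comm]
  have hΘ'g : Θ'.submatrix g id = 1 := by ext k l; simp [hg, one_apply, eq_comm]
  have hff := congrArg (submatrix · f f) heq
  have hfg := congrArg (submatrix · f g) heq
  have hidf := congrArg (submatrix · id f) heq
  simp only [submatrix_mul_mul_transpose, hΘf, hΘ'g, submatrix_id_id, transpose_one,
    Matrix.one_mul, Matrix.mul_one] at hff hfg hidf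
  set R := Θ'.submatrix f id
  set R' := Θ.submatrix g id
  have hR : R ∈ rowStochastic ℝ (Fin K) :=
    mem_rowStochastic_iff_sum.2 ⟨fun _ _ => (hΘ'01 _ _).1, fun _ => hrow' _⟩
  have hR' : R' ∈ rowStochastic ℝ (Fin K) :=
    mem_rowStochastic_iff_sum.2 ⟨fun _ _ => (hΘ01 _ _).1, fun _ => hrow _⟩
  have hRR' : R * R' = 1 := by
    rw [← transpose_eq_one, transpose_mul]
    refine (Matrix.mul_right_inj_of_invertible B).1 ?_
    rw [Matrix.mul_one, ← Matrix.mul_assoc, hfg, ← hff]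
  obtain ⟨σ, hRσ, -⟩ := exists_perm_eq_transpose_toMatrix_of_mul_eq_one hR hR' hRR'
  set P : Matrix (Fin K) (Fin K) ℝ := σ.toPEquiv.toMatrix
  rw [hRσ, transpose_transpose] at hff hidf
  refine ⟨σ, ?_, hff⟩
  apply mul_left_injective_of_invertible B
  calc Θ * B = Θ' * B' * P := hidf
    _ = Θ' * (P * Pᵀ) * B' * P := by rw [toMatrix_toPEquiv_mul_transpose, Matrix.mul_one]
    _ = Θ' * P * B := by rw [hff]; simp only [Matrix.mul_assoc]

theorem stmt_5 {n K : ℕ} (Θ Θ' : Matrix (Fin n) (Fin K) ℝ)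
    (B B' : Matrix (Fin K) (Fin K) ℝ)
    (hΘ01 : ∀ i k, Θ i k ∈ Set.Icc (0:ℝ) 1) (hΘ'01 : ∀ i k, Θ' i k ∈ Set.Icc (0:ℝ) 1)
    (hrow : ∀ i, ∑ k, Θ i k = 1) (hrow' : ∀ i, ∑ k, Θ' i k = 1)
    (hpure : ∀ k, ∃ i, ∀ l, Θ i l = if l = k then 1 else 0)
    (hpure' : ∀ k, ∃ i, ∀ l, Θ' i l = if l = k then 1 else 0)
    (hBsym : Bᵀ = B) (hB'sym : B'ᵀ = B')
    (hB : IsUnit B.det) (hB' : IsUnit B'.det)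
    (hB01 : ∀ k l, B k l ∈ Set.Icc (0:ℝ) 1) (hB'01 : ∀ k l, B' k l ∈ Set.Icc (0:ℝ) 1)
    (heq : Θ * B * Θᵀ = Θ' * B' * Θ'ᵀ) :
    ∃ σ : Equiv.Perm (Fin K),
      Θ = Θ' * (σ.toPEquiv.toMatrix : Matrix (Fin K) (Fin K) ℝ) ∧
      B = (σ.toPEquiv.toMatrix : Matrix (Fin K) (Fin K) ℝ)ᵀ * B'
            * (σ.toPEquiv.toMatrix : Matrix (Fin K) (Fin K) ℝ) :=
  stmt_5_general Θ Θ' B B' hΘ01 hΘ'01 hrow hrow' hpure hpure' hB heq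
end

section
/- Let Θ ∈ ℝ^{n×K} and B ∈ ℝ^{K×K} symmetric positive semidefinite, and set P = Θ B Θᵀ. Then λ_min(ΘᵀΘ) · λ_min(B) ≤ λ_min(P restricted to its column space), and in particular the smallest nonzero eigenvalue of P satisfies λ_K(P) ≥ λ_min(B)·λ_min(ΘᵀΘ) whenever Θ has rank K and B is positive definite. -/
open scoped BigOperators
open scoped Matrix

/-! If `P v = c v` with `c ≠ 0`, then `v = Θ w` for `w = c⁻¹ B Θᵀ v`, so `v` lies in the column
space of `Θ`. Put `u = Θᵀ v`. On one side `c ‖v‖² = uᵀ B u ≥ λ_min(B) ‖u‖²`. On the other,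
`‖v‖² = ⟨w, u⟩`, so Cauchy–Schwarz and `λ_min(ΘᵀΘ) ‖w‖² ≤ wᵀ ΘᵀΘ w = ‖v‖²` give
`λ_min(ΘᵀΘ) ‖v‖⁴ ≤ ‖v‖² ‖u‖²`, i.e. `‖u‖² ≥ λ_min(ΘᵀΘ) ‖v‖²`. -/

open Matrix
open scoped InnerProductSpace

lemma dotProduct_sq_le_dotProduct_self_mul {m : Type*} [Fintype m] (x y : m → ℝ) :
    (x ⬝ᵥ y) ^ 2 ≤ (x ⬝ᵥ x) * (y ⬝ᵥ y) := by
  simpa only [dotProduct, sq] using Finset.sum_mul_sq_le_sq_mul_sq Finset.univ x y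

lemma dotProduct_self_nonneg_real {m : Type*} [Fintype m] (x : m → ℝ) : 0 ≤ x ⬝ᵥ x := by
  simpa using dotProduct_star_self_nonneg x

section lamMin

variable {m : Type*} [Fintype m] [DecidableEq m]

lemma inner_toEuclideanLin (M : Matrix m m ℝ) (x : EuclideanSpace ℝ m) :
    ⟪x, toEuclideanLin M x⟫_ℝ = x.ofLp ⬝ᵥ M *ᵥ x.ofLp := by
  simp [EuclideanSpace.inner_eq_star_dotProduct, dotProduct_comm]

lemma bddBelow_range_inner_toEuclideanLin (M : Matrix m m ℝ) :
    BddBelow (Set.range fun v : {v : EuclideanSpace ℝ m // ‖v‖ = 1} =>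
      ⟪v.1, toEuclideanLin M v.1⟫_ℝ) := by
  set T := (toEuclideanLin M).toContinuousLinearMap
  refine ⟨-‖T‖, ?_⟩
  rintro _ ⟨⟨v, hv⟩, rfl⟩
  have hTv : ‖T v‖ ≤ ‖T‖ := by simpa [hv] using T.le_opNorm v
  have hinner := abs_real_inner_le_norm v (T v)
  rw [hv, one_mul] at hinner
  exact neg_le_of_abs_le (hinner.trans hTv)

lemma lamMin_mul_norm_sq_le (M : Matrix m m ℝ) (y : EuclideanSpace ℝ m) :
    lamMin M * ‖y‖ ^ 2 ≤ ⟪y, toEuclideanLin M y⟫_ℝ := by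
  rcases eq_or_ne y 0 with rfl | hy
  · simp
  have hy' : 0 < ‖y‖ := norm_pos_iff.mpr hy
  have hunit : ‖‖y‖⁻¹ • y‖ = 1 := by
    rw [norm_smul, norm_inv, norm_norm, inv_mul_cancel₀ hy'.ne']
  have h := ciInf_le (bddBelow_range_inner_toEuclideanLin M) ⟨_, hunit⟩
  rw [map_smul, real_inner_smul_left, real_inner_smul_right] at h
  calc lamMin M * ‖y‖ ^ 2 ≤ (‖y‖⁻¹ * (‖y‖⁻¹ * ⟪y, toEuclideanLin M y⟫_ℝ)) * ‖y‖ ^ 2 := by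
        gcongr; exact h
    _ = ⟪y, toEuclideanLin M y⟫_ℝ := by field_simp

lemma lamMin_mul_dotProduct_self_le (M : Matrix m m ℝ) (x : m → ℝ) :
    lamMin M * (x ⬝ᵥ x) ≤ x ⬝ᵥ M *ᵥ x := by
  have h := lamMin_mul_norm_sq_le M (WithLp.toLp 2 x)
  rwa [← real_inner_self_eq_norm_sq, inner_toEuclideanLin, EuclideanSpace.inner_eq_star_dotProduct,
    star_trivial, dotProduct_comm] at h

lemma Matrix.PosSemidef.lamMin_nonneg {M : Matrix m m ℝ} (hM : M.PosSemidef) : 0 ≤ lamMin M :=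
  Real.iInf_nonneg fun v => by
    simpa [inner_toEuclideanLin] using hM.dotProduct_mulVec_nonneg v.1.ofLp

end lamMin

lemma lamMin_gram_mul_dotProduct_self_le {m n : Type*} [Fintype m] [Fintype n] [DecidableEq n]
    (A : Matrix m n ℝ) (w : n → ℝ) :
    lamMin (Aᵀ * A) * (A *ᵥ w ⬝ᵥ A *ᵥ w) ≤ Aᵀ *ᵥ (A *ᵥ w) ⬝ᵥ Aᵀ *ᵥ (A *ᵥ w) := by
  set v := A *ᵥ w
  set u := Aᵀ *ᵥ v
  set l := lamMin (Aᵀ * A)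
  have hwu : w ⬝ᵥ u = v ⬝ᵥ v := by
    rw [dotProduct_mulVec, vecMul_transpose]
  have hray : l * (w ⬝ᵥ w) ≤ v ⬝ᵥ v := by
    rw [← hwu]
    simpa only [← mulVec_mulVec] using lamMin_mul_dotProduct_self_le (Aᵀ * A) w
  have hcs := dotProduct_sq_le_dotProduct_self_mul w u
  rw [hwu] at hcs
  have hv := dotProduct_self_nonneg_real v
  have hu := dotProduct_self_nonneg_real u
  rcases le_or_gt l 0 with hl | hl
  · exact (mul_nonpos_of_nonpos_of_nonneg hl hv).trans hu
  have key : l * (v ⬝ᵥ v) * (v ⬝ᵥ v) ≤ (u ⬝ᵥ u) * (v ⬝ᵥ v) := by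
    nlinarith [mul_le_mul_of_nonneg_left hcs hl.le, mul_le_mul_of_nonneg_right hray hu]
  rcases hv.eq_or_lt with hv0 | hv0
  · simpa [← hv0] using hu
  · exact le_of_mul_le_mul_right key hv0

theorem stmt_8_general {n K : ℕ} (Θ : Matrix (Fin n) (Fin K) ℝ)
    (B : Matrix (Fin K) (Fin K) ℝ) (hB : B.PosDef) :
    ∀ c : ℝ, c ≠ 0 → (∃ v : Fin n → ℝ, v ≠ 0 ∧ (Θ * B * Θᵀ).mulVec v = c • v) →
      lamMin B * lamMin (Θᵀ * Θ) ≤ c := by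
  rintro c hc ⟨v, hv, heig⟩
  set u := Θᵀ *ᵥ v
  have hcolumn : Θ *ᵥ (c⁻¹ • B *ᵥ u) = v := by
    rw [mulVec_smul, mulVec_mulVec, mulVec_mulVec, heig, smul_smul, inv_mul_cancel₀ hc, one_smul]
  have hquad : u ⬝ᵥ B *ᵥ u = c * (v ⬝ᵥ v) := by
    rw [← smul_eq_mul, ← dotProduct_smul, ← heig, ← mulVec_mulVec, ← mulVec_mulVec,
      dotProduct_mulVec v Θ, ← mulVec_transpose]
  have hgram := lamMin_gram_mul_dotProduct_self_le Θ (c⁻¹ • B *ᵥ u)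
  rw [hcolumn] at hgram
  have hvv : 0 < v ⬝ᵥ v :=
    (dotProduct_self_nonneg_real v).lt_of_ne' (dotProduct_self_eq_zero.not.mpr hv)
  refine le_of_mul_le_mul_right ?_ hvv
  calc lamMin B * lamMin (Θᵀ * Θ) * (v ⬝ᵥ v) ≤ lamMin B * (u ⬝ᵥ u) := by
        rw [mul_assoc]; exact mul_le_mul_of_nonneg_left hgram hB.posSemidef.lamMin_nonneg
    _ ≤ c * (v ⬝ᵥ v) := hquad ▸ lamMin_mul_dotProduct_self_le B u

theorem stmt_8 {n K : ℕ} (Θ : Matrix (Fin n) (Fin K) ℝ) (hΘ : Θ.rank = K)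
    (B : Matrix (Fin K) (Fin K) ℝ) (hB : B.PosDef) :
    ∀ c : ℝ, c ≠ 0 → (∃ v : Fin n → ℝ, v ≠ 0 ∧ (Θ * B * Θᵀ).mulVec v = c • v) →
      lamMin B * lamMin (Θᵀ * Θ) ≤ c :=
  stmt_8_general Θ B hB
end
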